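/- (Claim 12) Let n ≥ 3 and 3 ≤ L ≤ k be integers, and let x_1, …, x_{L−1} ∈ {1,…,L−1}^n be consecutive points under the ≤-order on [k]^n (that is, x_{i+1} = x_i⁺ for 1 ≤ i ≤ L−2). Let X = {y ∈ [k]^n : y ≤ x_{L−1}} and Y = {y ∈ [k]^n : y ≤ x_1}. Then |d(X)| = |d(Y)| if and only if for every 1 ≤ i ≤ L−1 the point x_i has first coordinate equal to i and all other coordinates equal to L−1. -/

import Mathlib

open Finset
open scoped Classical

/-- `R_i(x)`: the set of coordinates of `x` equal to `i`.
The ambient alphabet is `[k+1] = {0,…,k}`. -/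
noncomputable def rset {k N : ℕ} (x : Fin N → Fin (k + 1)) (i : ℕ) : Finset (Fin N) :=
  Finset.univ.filter fun j => (x j : ℕ) = i

/-- the strict binary order on finite sets of coordinates:
`X <_bin Y` iff `X ≠ Y` and `max (X Δ Y) ∈ Y`. -/
def binLT {N : ℕ} (X Y : Finset (Fin N)) : Prop :=
  ∃ m ∈ Y, m ∉ X ∧ ∀ j : Fin N, ((j ∈ X ∧ j ∉ Y) ∨ (j ∈ Y ∧ j ∉ X)) → j ≤ m

/-- the strict `≤`-order on `[k+1]^N`: `x < y` iff `|R_0(x)| > |R_0(y)|`, or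
`|R_0(x)| = |R_0(y)|` and for the largest `i` with `R_i(x) ≠ R_i(y)` we have
`max (R_i(x) Δ R_i(y)) ∈ R_i(y)`. -/
def plt {k N : ℕ} (x y : Fin N → Fin (k + 1)) : Prop :=
  (rset y 0).card < (rset x 0).card ∨
    ((rset x 0).card = (rset y 0).card ∧
      ∃ i : ℕ, binLT (rset x i) (rset y i) ∧ ∀ j : ℕ, i < j → rset x j = rset y j)

/-- the `≤`-order on `[k+1]^N`. -/
def ple {k N : ℕ} (x y : Fin N → Fin (k + 1)) : Prop := x = y ∨ plt x y

/-- `B` is an initial segment of the `≤`-order. -/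
def isInitSeg {k N : ℕ} (B : Finset (Fin N → Fin (k + 1))) : Prop :=
  ∀ y ∈ B, ∀ x, ple x y → x ∈ B

/-- the `d`-shadow: all points obtained from a point of `A` by flipping one
nonzero coordinate to `0`. -/
noncomputable def dShadow {k N : ℕ} (A : Finset (Fin N → Fin (k + 1))) :
    Finset (Fin N → Fin (k + 1)) :=
  A.biUnion fun x =>
    (Finset.univ.filter fun i => x i ≠ 0).image fun i => Function.update x i 0

/-- the initial segment of the `≤`-order on `[k+1]^N` of cardinality `m`. -/
noncomputable def initSeg (k N m : ℕ) : Finset (Fin N → Fin (k + 1)) :=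
  Finset.univ.filter fun x => (Finset.univ.filter fun y => ple y x).card ≤ m

/-- the `C_s`-compression of `A ⊆ [k+1]^(n+1)`: replace each slice
`A_{s,t} = {y : t_s y ∈ A}` by the initial segment of the same size. -/
noncomputable def compress {k n : ℕ} (s : Fin (n + 1)) (A : Finset (Fin (n + 1) → Fin (k + 1))) :
    Finset (Fin (n + 1) → Fin (k + 1)) :=
  Finset.univ.biUnion fun t : Fin (k + 1) =>
    (initSeg k n
        (Finset.univ.filter fun y : Fin n → Fin (k + 1) => s.insertNth t y ∈ A).card).image
      fun y => s.insertNth t y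

/-- `A` is compressed if every `C_s`-compression fixes it. -/
def IsCompressed {k n : ℕ} (A : Finset (Fin (n + 1) → Fin (k + 1))) : Prop :=
  ∀ s : Fin (n + 1), compress s A = A

/-- `B_r`: points with exactly `r` zero coordinates. -/
noncomputable def Bexact (k N r : ℕ) : Finset (Fin N → Fin (k + 1)) :=
  Finset.univ.filter fun x => (rset x 0).card = r

/-- `B_{≥r}`: points with at least `r` zero coordinates. -/
noncomputable def Bge (k N r : ℕ) : Finset (Fin N → Fin (k + 1)) :=
  Finset.univ.filter fun x => r ≤ (rset x 0).card

/-- `m(x)`: the largest coordinate value of `x`. -/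
noncomputable def mval {k N : ℕ} (x : Fin N → Fin (k + 1)) : ℕ :=
  Finset.univ.sup fun i => (x i : ℕ)

/-- the class `C_X`: points with maximal coordinate `s`, attained exactly on `X`,
and exactly `r` zero coordinates. -/
noncomputable def classSet (k N s r : ℕ) (X : Finset (Fin N)) : Finset (Fin N → Fin (k + 1)) :=
  Finset.univ.filter fun x => mval x = s ∧ rset x s = X ∧ (rset x 0).card = r

/-- `[m]^N = {0,…,m−1}^N`. -/
noncomputable def box (k N m : ℕ) : Finset (Fin N → Fin (k + 1)) :=
  Finset.univ.filter fun x => ∀ i, (x i : ℕ) < m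

/-- `{1,…,s−1}^N`. -/
noncomputable def box1 (k N s : ℕ) : Finset (Fin N → Fin (k + 1)) :=
  Finset.univ.filter fun x => ∀ i, 1 ≤ (x i : ℕ) ∧ (x i : ℕ) ≤ s - 1

/-- `B` is a down-set. -/
def isDownSet {k N : ℕ} (B : Finset (Fin N → Fin (k + 1))) : Prop :=
  ∀ y ∈ B, ∀ x : Fin N → Fin (k + 1), (∀ j, (x j : ℕ) ≤ (y j : ℕ)) → x ∈ B

/-! Keyed by its number of zeros (reversed) followed by its classes `R_k, …, R_0` compared in
colex order, the `≤`-order becomes a lexicographic order, hence linear, and `Y ⊆ X`; so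
`|d(X)| = |d(Y)|` means `d(X) ⊆ d(Y)`.

If some `x_i` with `i ≥ 2` had a coordinate `1`, zeroing it would give a point of `d(Y)`,
which can only come from a point `≥ x_i > x_1`. So `x_2, …, x_{L-1}` avoid `1`. The successor
of a zero-free point with least coordinate `v`, first attained at `t`, raises `x_t` to `v + 1`,
keeps the coordinates above `v + 1` and the later ones equal to `v + 1`, and drops every other
coordinate to `1`; when no `1` may appear this forces `x_{i+1} = max(x_i, v_i + 1)` with `v_i` attained only at
`t`. The minima thus grow by one from `v_1 ≥ 1` to `v_{L-1} ≤ L - 1`, so `v_i = i`, and going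
back down from `x_{L-1} = (L-1, …, L-1)` gives the claimed shape.

Conversely, for that shape the shadow of `x_i` at coordinate `0` is the one of `x_1`, and at
`p ≠ 0` it is the shadow of `x_i` with `p`-th coordinate lowered to `1`, a point below `x_1`.
-/

lemma Finset.Colex.toColex_insert_filter_le {α : Type*} [LinearOrder α] {S W : Finset α} {t : α}
    (ht : t ∉ S) (hW : ∀ j ∈ W, j < t → j ∈ S) (h : toColex S < toColex W) :
    toColex (insert t (S.filter (t < ·))) ≤ toColex W := by
  obtain ⟨a, haW, haS, hlt⟩ := Colex.toColex_lt_toColex_iff_exists_forall_lt.1 h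
  have hta : t ≤ a := not_lt.1 fun hat => haS (hW a haW hat)
  intro b hb hbW
  have hba : b < a ∨ b = t := by
    rcases mem_insert.1 hb with rfl | hb
    · exact Or.inr rfl
    · exact Or.inl (hlt b (mem_filter.1 hb).1 hbW)
  have hat : a ≠ t := by
    rintro rfl
    rcases hba with hba | rfl
    · exact (mem_filter.1 ((mem_insert.1 hb).resolve_left hba.ne)).2.not_gt hba
    · exact hbW haW
  refine ⟨a, haW, fun ha => ?_, hba.elim le_of_lt (· ▸ hta)⟩
  rcases mem_insert.1 ha with rfl | ha
  · exact hat rfl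
  · exact haS (mem_filter.1 ha).1

section PointOrder

variable {k N : ℕ}

@[simp]
lemma mem_rset {x : Fin N → Fin (k + 1)} {i : ℕ} {j : Fin N} : j ∈ rset x i ↔ (x j : ℕ) = i := by
  simp [rset]

lemma rset_eq_empty {x : Fin N → Fin (k + 1)} {i : ℕ} (h : ∀ j, (x j : ℕ) ≠ i) :
    rset x i = ∅ :=
  eq_empty_of_forall_notMem fun j hj => h j (mem_rset.1 hj)

lemma rset_eq_empty_of_lt (x : Fin N → Fin (k + 1)) {i : ℕ} (h : k < i) : rset x i = ∅ :=
  rset_eq_empty fun j => ((x j).isLt.trans_le h).ne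

lemma binLT_iff_toColex_lt {X Y : Finset (Fin N)} : binLT X Y ↔ toColex X < toColex Y := by
  constructor
  · rintro ⟨m, hmY, hmX, hmax⟩
    exact Colex.toColex_lt_toColex_iff_exists_forall_lt.2 ⟨m, hmY, hmX,
      fun b hbX hbY => (hmax b (Or.inl ⟨hbX, hbY⟩)).lt_of_ne (ne_of_mem_of_not_mem hbX hmX)⟩
  · intro h
    obtain ⟨hXY, hmY⟩ := Colex.toColex_lt_toColex_iff_max'_mem.1 h
    refine ⟨_, hmY, fun hmX => ?_, fun j hj => le_max' _ _ (mem_symmDiff.2 hj)⟩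
    have := max'_mem _ (symmDiff_nonempty.2 hXY)
    simp_all [mem_symmDiff]

noncomputable def plKey (x : Fin N → Fin (k + 1)) :
    ℕᵒᵈ ×ₗ Colex (Fin (k + 1) → Colex (Finset (Fin N))) :=
  toLex (OrderDual.toDual (rset x 0).card, toColex fun i => toColex (rset x i))

lemma plt_iff_plKey_lt {x y : Fin N → Fin (k + 1)} : plt x y ↔ plKey x < plKey y := by
  rw [plt, plKey, plKey, Prod.Lex.toLex_lt_toLex, OrderDual.toDual_lt_toDual,
    OrderDual.toDual_inj]
  refine or_congr Iff.rfl (and_congr_right fun _ => ⟨?_, ?_⟩)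
  · rintro ⟨i, hi, habove⟩
    obtain ⟨m, hm, -⟩ := id hi
    have hik : i < k + 1 := (mem_rset.1 hm) ▸ (y m).isLt
    exact ⟨⟨i, hik⟩, fun j hj => congrArg toColex (habove j hj), binLT_iff_toColex_lt.1 hi⟩
  · rintro ⟨i, habove, hi⟩
    refine ⟨i, binLT_iff_toColex_lt.2 hi, fun j hj => ?_⟩
    rcases lt_or_ge k j with hkj | hjk
    · rw [rset_eq_empty_of_lt x hkj, rset_eq_empty_of_lt y hkj]
    · exact toColex_inj.1 (habove ⟨j, by omega⟩ hj)

lemma plKey_injective : Function.Injective (plKey : (Fin N → Fin (k + 1)) → _) := by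
  intro x y h
  have hr : ∀ i : Fin (k + 1), rset x i = rset y i := fun i =>
    toColex_inj.1 (congrFun (toColex_inj.1 (Prod.ext_iff.1 (toLex_inj.1 h)).2) i)
  funext j
  exact Fin.ext (mem_rset.1 (hr (x j) ▸ mem_rset.2 rfl)).symm

lemma ple_iff_plKey_le {x y : Fin N → Fin (k + 1)} : ple x y ↔ plKey x ≤ plKey y := by
  rw [ple, plt_iff_plKey_lt, le_iff_eq_or_lt, plKey_injective.eq_iff]

lemma val_eq_of_rset_eq_of_lt {x y : Fin N → Fin (k + 1)} {i : ℕ}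
    (habove : ∀ j, i < j → rset x j = rset y j) {m : Fin N} (hm : i < x m) :
    (y m : ℕ) = x m :=
  mem_rset.1 (habove _ hm ▸ mem_rset.2 rfl)

lemma rset_update (y : Fin N → Fin (k + 1)) (j : Fin N) (b : Fin (k + 1)) (i : ℕ) :
    rset (Function.update y j b) i =
      if (b : ℕ) = i then insert j (rset y i) else (rset y i).erase j := by
  ext q
  by_cases hq : q = j
  · subst hq
    split_ifs <;> simp_all
  · split_ifs <;> simp [hq]

lemma plt_update_of_lt (y : Fin N → Fin (k + 1)) {j : Fin N} {b : Fin (k + 1)}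
    (hy : y j ≠ 0) (h : y j < b) : plt y (Function.update y j b) := by
  have hyj : (y j : ℕ) ≠ 0 := Fin.val_ne_zero_iff.2 hy
  have hjb : (y j : ℕ) < b := h
  have hrest : ∀ i, (b : ℕ) ≠ i → (y j : ℕ) ≠ i → rset (Function.update y j b) i = rset y i := by
    intro i hb hi
    rw [rset_update, if_neg hb, erase_eq_of_notMem (by simpa using hi)]
  refine Or.inr ⟨by rw [hrest 0 (by omega) hyj], b, ?_,
    fun i hi => (hrest i (by omega) (by omega)).symm⟩
  rw [binLT_iff_toColex_lt, rset_update, if_pos rfl]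
  exact Colex.toColex_lt_toColex_of_ssubset (ssubset_insert (by simpa using hjb.ne))

lemma rset_zero_eq_empty {x : Fin N → Fin (k + 1)} : rset x 0 = ∅ ↔ ∀ j, x j ≠ 0 :=
  ⟨fun h j hj => notMem_empty j (h ▸ mem_rset.2 (by simp [hj])),
    fun h => rset_eq_empty fun j => Fin.val_ne_zero_iff.2 (h j)⟩

lemma exists_top_class_of_plt {x w : Fin N → Fin (k + 1)} (hx : ∀ j, x j ≠ 0) (h : plt x w) :
    (∀ j, w j ≠ 0) ∧ ∃ i, binLT (rset x i) (rset w i) ∧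
      (∀ j, i < j → rset x j = rset w j) ∧ ∃ m, (x m : ℕ) < i ∧ (w m : ℕ) = i := by
  rw [← rset_zero_eq_empty] at hx ⊢
  rw [← card_eq_zero]
  obtain h | ⟨h0, i, hbin, habove⟩ := h
  · simp [hx] at h
  refine ⟨by rw [← h0, hx, card_empty], i, hbin, habove, ?_⟩
  obtain ⟨m, hmw, hmx, -⟩ := hbin
  rw [mem_rset] at hmw hmx
  refine ⟨m, ?_, hmw⟩
  by_contra hle
  have := val_eq_of_rset_eq_of_lt habove (m := m) (by omega)
  omega

lemma mem_dShadow {A : Finset (Fin N → Fin (k + 1))} {z : Fin N → Fin (k + 1)} :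
    z ∈ dShadow A ↔ ∃ y ∈ A, ∃ p, y p ≠ 0 ∧ Function.update y p 0 = z := by
  simp [dShadow]

lemma dShadow_mono {A B : Finset (Fin N → Fin (k + 1))} (h : A ⊆ B) : dShadow A ⊆ dShadow B :=
  biUnion_subset_biUnion_of_subset_left _ h

lemma plt_of_forall_le_of_rset_lt {a b : Fin N → Fin (k + 1)} {l : ℕ}
    (ha : ∀ j, (a j : ℕ) ≤ l) (hb : ∀ j, (b j : ℕ) ≤ l) (h0 : rset a 0 = rset b 0)
    (h : toColex (rset a l) < toColex (rset b l)) : plt a b :=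
  Or.inr ⟨by rw [h0], l, binLT_iff_toColex_lt.2 h, fun i hi => by
    rw [rset_eq_empty fun j => ((ha j).trans_lt hi).ne,
      rset_eq_empty fun j => ((hb j).trans_lt hi).ne]⟩

lemma ple_of_update_zero_mem_dShadow {y a : Fin N → Fin (k + 1)} (hy : ∀ j, y j ≠ 0) {p : Fin N}
    (hp : (y p : ℕ) = 1)
    (h : Function.update y p 0 ∈ dShadow (univ.filter fun w => ple w a)) : ple y a := by
  obtain ⟨w, hw, q, hq, hwq⟩ := mem_dShadow.1 h
  have hqp : q = p := by
    by_contra hne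
    have := congrFun hwq q
    rw [Function.update_self, Function.update_of_ne hne] at this
    exact hy q this.symm
  subst hqp
  have hw_eq : w = Function.update y q (w q) := by
    funext j
    by_cases hj : j = q
    · subst hj; simp
    · simpa [Function.update_of_ne hj] using congrFun hwq j
  have hyw : ple y w := by
    by_cases hwy : w q = y q
    · exact Or.inl (by rw [hw_eq, hwy, Function.update_eq_self])
    · rw [hw_eq]
      refine Or.inr (plt_update_of_lt y (hy q) (Fin.lt_def.2 ?_))
      have := Fin.val_ne_zero_iff.2 hq
      have := Fin.val_ne_iff.2 hwy
      omega
  rw [ple_iff_plKey_le] at hyw ⊢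
  exact hyw.trans (ple_iff_plKey_le.1 (mem_filter.1 hw).2)

/-- `b` is the immediate successor `a⁺` of `a` in the `≤`-order. -/
def IsPltSucc (a b : Fin N → Fin (k + 1)) : Prop :=
  plt a b ∧ ∀ z, plt a z → ple b z

lemma IsPltSucc.eq {a b c : Fin N → Fin (k + 1)} (hb : IsPltSucc a b) (hc : IsPltSucc a c) :
    b = c :=
  plKey_injective <| le_antisymm (ple_iff_plKey_le.1 (hb.2 c hc.1))
    (ple_iff_plKey_le.1 (hc.2 b hb.1))

lemma ple_of_rset_eq_of_forall_le {c w : Fin N → Fin (k + 1)} (hw : ∀ j, w j ≠ 0) {l : ℕ}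
    (habove : ∀ i, l < i → rset c i = rset w i)
    (hlow : ∀ j, (c j : ℕ) ≤ l → (c j : ℕ) = 1) : ple c w := by
  refine ple_iff_plKey_le.2 (le_of_not_gt fun h => ?_)
  rcases plt_iff_plKey_lt.2 h with h | ⟨-, i, ⟨m, hmc, hmw, -⟩, habove'⟩
  · rw [rset_eq_empty fun j => Fin.val_ne_zero_iff.2 (hw j)] at h
    simp at h
  · rw [mem_rset] at hmc hmw
    have hwm := Fin.val_ne_zero_iff.2 (hw m)
    rcases lt_or_ge l i with hli | hil
    · exact (habove i hli ▸ mem_rset.2 hmc : m ∈ rset w i) |> mem_rset.1 |> hmw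
    · have := hlow m (by omega)
      have := val_eq_of_rset_eq_of_lt habove' (m := m) (by omega)
      omega

lemma rset_raise_first_min {x c : Fin N → Fin (k + 1)} {v : ℕ} {t : Fin N} (hv : 1 ≤ v)
    (hmin : ∀ j, v ≤ x j) (ht : (x t : ℕ) = v)
    (hc : ∀ j, (c j : ℕ) = if (x j : ℕ) ≤ v + 1 then
      (if j = t ∨ t < j ∧ (x j : ℕ) = v + 1 then v + 1 else 1) else x j) :
    (∀ j, c j ≠ 0) ∧ rset c (v + 1) = insert t ((rset x (v + 1)).filter (t < ·)) ∧
      (∀ i, v + 1 < i → rset c i = rset x i) ∧ ∀ j, (c j : ℕ) ≤ v → (c j : ℕ) = 1 := by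
  refine ⟨fun j => Fin.val_ne_zero_iff.1 ?_, ?_, fun i hi => ?_, fun j => ?_⟩
  · rw [hc j]; split_ifs <;> omega
  · ext j
    simp only [mem_rset, hc j, mem_insert, mem_filter]
    split_ifs <;> grind
  · ext j
    simp only [mem_rset, hc j]
    split_ifs <;> omega
  · rw [hc j]
    have := hmin j
    split_ifs <;> omega

lemma isPltSucc_of_first_min (x c : Fin N → Fin (k + 1)) {v : ℕ} {t : Fin N} (hv : 1 ≤ v)
    (hmin : ∀ j, v ≤ x j) (ht : (x t : ℕ) = v) (hfirst : ∀ j, (x j : ℕ) = v → t ≤ j)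
    (hc : ∀ j, (c j : ℕ) = if (x j : ℕ) ≤ v + 1 then
      (if j = t ∨ t < j ∧ (x j : ℕ) = v + 1 then v + 1 else 1) else x j) :
    IsPltSucc x c := by
  obtain ⟨hc0, htop, habove, hlow⟩ := rset_raise_first_min hv hmin ht hc
  set S := rset x (v + 1)
  have htS : t ∉ S := by simp [S, ht]
  have hx0 : ∀ j, x j ≠ 0 := fun j => Fin.val_ne_zero_iff.1 (by have := hmin j; omega)
  have hc0' : rset c 0 = rset x 0 := by rw [rset_zero_eq_empty.2 hc0, rset_zero_eq_empty.2 hx0]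
  refine ⟨Or.inr ⟨by rw [hc0'], v + 1, ?_, fun i hi => (habove i hi).symm⟩, fun w hw => ?_⟩
  · rw [binLT_iff_toColex_lt, htop]
    refine Colex.toColex_lt_toColex_iff_exists_forall_lt.2
      ⟨t, mem_insert_self _ _, htS, fun b hbS hbS' => ?_⟩
    rcases lt_trichotomy b t with h | rfl | h
    · exact h
    · exact absurd hbS htS
    · exact absurd (mem_insert_of_mem (mem_filter.2 ⟨hbS, h⟩)) hbS'
  obtain ⟨hw0, i, hbin, hiabove, m, hxm, -⟩ := exists_top_class_of_plt hx0 hw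
  have hcw0 : rset c 0 = rset w 0 := by
    rw [rset_zero_eq_empty.2 hc0, rset_zero_eq_empty.2 hw0]
  obtain hi | rfl : v + 1 < i ∨ i = v + 1 := by have := hmin m; omega
  · exact Or.inr (Or.inr ⟨by rw [hcw0], i, habove i hi ▸ hbin,
      fun j hj => (habove j (by omega)).trans (hiabove j hj)⟩)
  have hcw : ∀ j, v + 1 < j → rset c j = rset w j := fun j hj =>
    (habove j hj).trans (hiabove j hj)
  have hW : ∀ j ∈ rset w (v + 1), j < t → j ∈ S := by
    intro j hj hjt
    rw [mem_rset] at hj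
    have hxj : (x j : ℕ) ≤ v + 1 := by
      by_contra hgt
      have := val_eq_of_rset_eq_of_lt hiabove (m := j) (by omega)
      omega
    have : (x j : ℕ) ≠ v := fun h => (hfirst j h).not_gt hjt
    have := hmin j
    simp only [S, mem_rset]
    omega
  have hgap := Colex.toColex_insert_filter_le htS hW (binLT_iff_toColex_lt.1 hbin)
  rw [← htop] at hgap
  rcases hgap.lt_or_eq with hlt | heq
  · exact Or.inr (Or.inr ⟨by rw [hcw0], v + 1, binLT_iff_toColex_lt.2 hlt, hcw⟩)
  · refine ple_of_rset_eq_of_forall_le hw0 (l := v) (fun i hi => ?_) hlow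
    obtain rfl | hi := eq_or_lt_of_le (Nat.succ_le_of_lt hi)
    · exact toColex_inj.1 heq
    · exact hcw i hi

lemma exists_first_min [NeZero N] (x : Fin N → Fin (k + 1)) :
    ∃ v t, (∀ j, v ≤ (x j : ℕ)) ∧ (x t : ℕ) = v ∧ ∀ j, (x j : ℕ) = v → t ≤ j := by
  obtain ⟨t, -, ht⟩ := exists_min_image univ (fun j => toLex ((x j : ℕ), j)) univ_nonempty
  refine ⟨x t, t, fun j => ?_, rfl, fun j hj => ?_⟩ <;>
    rcases Prod.Lex.toLex_le_toLex.1 (ht j (mem_univ j)) with h | ⟨h, h'⟩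
  · exact h.le
  · exact h.le
  · omega
  · exact h'

lemma val_eq_max_of_isPltSucc {x y : Fin N → Fin (k + 1)} (hxy : IsPltSucc x y)
    (hx : ∀ j, x j ≠ 0) (hy : ∀ j, (y j : ℕ) ≠ 1) {v : ℕ} {t : Fin N} (hmin : ∀ j, v ≤ x j)
    (ht : (x t : ℕ) = v) (hfirst : ∀ j, (x j : ℕ) = v → t ≤ j) :
    (∀ j, (y j : ℕ) = max (x j : ℕ) (v + 1)) ∧ (∀ j, (x j : ℕ) = v → j = t) ∧
      ∀ j < t, v + 1 < x j := by
  have hv : 1 ≤ v := ht ▸ Nat.pos_of_ne_zero (Fin.val_ne_zero_iff.2 (hx t))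
  obtain ⟨-, i, -, -, m, hxm, hym⟩ := exists_top_class_of_plt hx hxy.1
  have hvk : v + 1 < k + 1 := by have := (y m).isLt; have := hmin m; omega
  let c : Fin N → Fin (k + 1) := fun j => if (x j : ℕ) ≤ v + 1 then
    (if j = t ∨ t < j ∧ (x j : ℕ) = v + 1 then ⟨v + 1, hvk⟩ else ⟨1, by omega⟩) else x j
  have hc : ∀ j, (c j : ℕ) = if (x j : ℕ) ≤ v + 1 then
      (if j = t ∨ t < j ∧ (x j : ℕ) = v + 1 then v + 1 else 1) else x j := fun j => by
    simp only [c]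
    split_ifs <;> rfl
  have hyc : y = c := hxy.eq (isPltSucc_of_first_min x c hv hmin ht hfirst hc)
  have hraise : ∀ j, (x j : ℕ) ≤ v + 1 → j = t ∨ t < j ∧ (x j : ℕ) = v + 1 := fun j hj => by
    by_contra h
    exact hy j (by rw [hyc, hc, if_pos hj, if_neg h])
  refine ⟨fun j => ?_, fun j hj => ?_, fun j hj => ?_⟩
  · rw [hyc, hc]
    by_cases h : (x j : ℕ) ≤ v + 1
    · rw [if_pos h, if_pos (hraise j h)]
      omega
    · rw [if_neg h]
      omega
  · rcases hraise j (by omega) with h | ⟨-, h⟩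
    · exact h
    · omega
  · by_contra hle
    rcases hraise j (by omega) with rfl | ⟨h, -⟩
    · exact lt_irrefl _ hj
    · exact lt_asymm h hj

end PointOrder

section Chain

variable {k N : ℕ} (x : ℕ → Fin N → Fin (k + 1)) {a b : ℕ}

lemma plKey_strictMonoOn (h : ∀ i, a ≤ i → i < b → IsPltSucc (x i) (x (i + 1))) :
    StrictMonoOn (fun i => plKey (x i)) (Set.Icc a b) :=
  strictMonoOn_of_lt_add_one Set.ordConnected_Icc fun i _ hi hi1 =>
    plt_iff_plKey_lt.1 (h i hi.1 (Nat.lt_of_succ_le hi1.2)).1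

lemma exists_eq_of_plt_of_ple (hab : a ≤ b)
    (h : ∀ i, a ≤ i → i < b → IsPltSucc (x i) (x (i + 1))) {w : Fin N → Fin (k + 1)}
    (hlo : plt (x a) w) (hhi : ple w (x b)) : ∃ i, a < i ∧ i ≤ b ∧ w = x i := by
  induction b, hab using Nat.le_induction with
  | base =>
    exact absurd (ple_iff_plKey_le.1 hhi) (not_le.2 (plt_iff_plKey_lt.1 hlo))
  | succ b hab ih =>
    by_cases hwb : ple w (x b)
    · obtain ⟨i, hai, hib, rfl⟩ := ih (fun i h1 h2 => h i h1 (by omega)) hwb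
      exact ⟨i, hai, by omega, rfl⟩
    · have hbw : plt (x b) w := plt_iff_plKey_lt.2 (not_le.1 (mt ple_iff_plKey_le.2 hwb))
      have := (h b hab (by omega)).2 w hbw
      exact ⟨b + 1, by omega, le_rfl, plKey_injective (le_antisymm (ple_iff_plKey_le.1 hhi)
        (ple_iff_plKey_le.1 this))⟩

end Chain

section Claim

variable {k n L : ℕ}

lemma min_eq_of_max_chain (hL : 3 ≤ L) (x : ℕ → Fin (n + 1) → Fin (k + 1)) (v : ℕ → ℕ)
    (hbox : ∀ i, 1 ≤ i → i ≤ L - 1 → ∀ j, 1 ≤ (x i j : ℕ) ∧ (x i j : ℕ) ≤ L - 1)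
    (hmin : ∀ i j, v i ≤ x i j) (hatt : ∀ i, ∃ j, (x i j : ℕ) = v i)
    (hstep : ∀ i, 1 ≤ i → i ≤ L - 2 → ∀ j, (x (i + 1) j : ℕ) = max (x i j : ℕ) (v i + 1)) :
    ∀ i, 1 ≤ i → i ≤ L - 1 → v i = i := by
  have hsucc : ∀ i, 1 ≤ i → i ≤ L - 2 → v (i + 1) = v i + 1 := by
    intro i h1 h2
    obtain ⟨j, hj⟩ := hatt i
    obtain ⟨j', hj'⟩ := hatt (i + 1)
    have := hstep i h1 h2 j
    have := hstep i h1 h2 j'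
    have := hmin i j'
    have := hmin (i + 1) j
    omega
  have hlin : ∀ d, d ≤ L - 2 → v (1 + d) = v 1 + d := by
    intro d hd
    induction d with
    | zero => rfl
    | succ d ih => rw [← add_assoc, hsucc _ (by omega) (by omega), ih (by omega), add_assoc]
  obtain ⟨j, hj⟩ := hatt 1
  obtain ⟨j', hj'⟩ := hatt (L - 1)
  have := (hbox 1 le_rfl (by omega) j).1
  have := (hbox (L - 1) (by omega) le_rfl j').2
  have := hlin (L - 2) le_rfl
  intro i h1 h2
  have := hlin (i - 1) (by omega)
  rw [show 1 + (i - 1) = i by omega, show 1 + (L - 2) = L - 1 by omega] at *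
  omega

lemma shape_of_max_chain (hL : 3 ≤ L) (x : ℕ → Fin (n + 1) → Fin (k + 1))
    (hbox : ∀ i, 1 ≤ i → i ≤ L - 1 → ∀ j, i ≤ (x i j : ℕ) ∧ (x i j : ℕ) ≤ L - 1)
    (hatt : ∀ i, 1 ≤ i → i ≤ L - 1 → ∃ j, (x i j : ℕ) = i)
    (hstep : ∀ i, 1 ≤ i → i ≤ L - 2 → ∀ j, (x (i + 1) j : ℕ) = max (x i j : ℕ) (i + 1))
    (hfirst : ∀ j, (x (L - 2) j : ℕ) = L - 2 → j = 0) :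
    ∀ i, 1 ≤ i → i ≤ L - 1 → (x i 0 : ℕ) = i ∧ ∀ j, j ≠ 0 → (x i j : ℕ) = L - 1 := by
  suffices h : ∀ d, d ≤ L - 2 → ∀ j, j ≠ 0 → (x (L - 1 - d) j : ℕ) = L - 1 by
    intro i h1 h2
    have hoff := h (L - 1 - i) (by omega)
    rw [show L - 1 - (L - 1 - i) = i by omega] at hoff
    refine ⟨?_, hoff⟩
    obtain ⟨j, hj⟩ := hatt i h1 h2
    obtain rfl | hj0 := eq_or_ne j 0
    · exact hj
    · have := hoff j hj0
      have := hbox i h1 h2 0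
      omega
  intro d hd
  induction d with
  | zero =>
    intro j _
    rw [Nat.sub_zero]
    have := hbox (L - 1) (by omega) le_rfl j
    omega
  | succ d ih =>
    intro j hj
    have hi := hstep (L - 1 - (d + 1)) (by omega) (by omega) j
    rw [show L - 1 - (d + 1) + 1 = L - 1 - d by omega, ih (by omega) j hj] at hi
    have := hbox (L - 1 - (d + 1)) (by omega) (by omega) j
    have : d = 0 → (x (L - 1 - (d + 1)) j : ℕ) ≠ L - 2 := by
      rintro rfl h
      exact hj (hfirst j (by simpa [show L - 1 - 1 = L - 2 by omega] using h))
    omega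

lemma shape_of_dShadow_subset (hL : 3 ≤ L) (x : ℕ → Fin (n + 1) → Fin (k + 1))
    (hbox : ∀ i, 1 ≤ i → i ≤ L - 1 → ∀ j, 1 ≤ (x i j : ℕ) ∧ (x i j : ℕ) ≤ L - 1)
    (hsucc : ∀ i, 1 ≤ i → i < L - 1 → IsPltSucc (x i) (x (i + 1)))
    (h : dShadow (univ.filter fun y => ple y (x (L - 1))) ⊆
      dShadow (univ.filter fun y => ple y (x 1))) :
    ∀ i, 1 ≤ i → i ≤ L - 1 → (x i 0 : ℕ) = i ∧ ∀ j, j ≠ 0 → (x i j : ℕ) = L - 1 := by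
  have hx0 : ∀ i, 1 ≤ i → i ≤ L - 1 → ∀ j, x i j ≠ 0 := fun i h1 h2 j =>
    Fin.val_ne_zero_iff.1 (by have := (hbox i h1 h2 j).1; omega)
  have hmono := plKey_strictMonoOn x hsucc
  have hno1 : ∀ i, 2 ≤ i → i ≤ L - 1 → ∀ j, (x i j : ℕ) ≠ 1 := by
    intro i h2 hi j hj
    have hxi : ple (x i) (x (L - 1)) := ple_iff_plKey_le.2 <|
      hmono.monotoneOn ⟨by omega, hi⟩ ⟨by omega, le_rfl⟩ hi
    have := ple_iff_plKey_le.1 <| ple_of_update_zero_mem_dShadow (hx0 i (by omega) hi) hj <|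
      h (mem_dShadow.2 ⟨x i, mem_filter.2 ⟨mem_univ _, hxi⟩, j, hx0 i (by omega) hi j, rfl⟩)
    exact this.not_gt (hmono ⟨le_rfl, by omega⟩ ⟨by omega, hi⟩ (by omega))
  choose v t hmin ht hfirst using fun i => exists_first_min (x i)
  have hstep := fun i (h1 : 1 ≤ i) (h2 : i ≤ L - 2) =>
    val_eq_max_of_isPltSucc (hsucc i h1 (by omega)) (hx0 i h1 (by omega))
      (hno1 (i + 1) (by omega) (by omega)) (hmin i) (ht i) (hfirst i)
  have hv := min_eq_of_max_chain hL x v hbox hmin (fun i => ⟨t i, ht i⟩)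
    fun i h1 h2 => (hstep i h1 h2).1
  obtain ⟨-, huniq, hbelow⟩ := hstep (L - 2) (by omega) le_rfl
  have hvL : v (L - 2) = L - 2 := hv _ (by omega) (by omega)
  have ht0 : t (L - 2) = 0 := by
    by_contra hne
    have := hbelow 0 (Fin.pos_iff_ne_zero.2 hne)
    have := (hbox (L - 2) (by omega) (by omega) 0).2
    omega
  refine shape_of_max_chain hL x
    (fun i h1 h2 j => ⟨(hv i h1 h2).symm.trans_le (hmin i j), (hbox i h1 h2 j).2⟩)
    (fun i h1 h2 => ⟨t i, (ht i).trans (hv i h1 h2)⟩) (fun i h1 h2 j => ?_)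
    (fun j hj => ht0 ▸ huniq j (hj.trans hvL.symm))
  rw [(hstep i h1 h2).1 j, hv i h1 (by omega)]

lemma plt_update_one_of_eq {a b : Fin (n + 1) → Fin (k + 1)} {l : ℕ} (hl : 2 ≤ l)
    (ha0 : 1 ≤ (a 0 : ℕ) ∧ (a 0 : ℕ) ≤ l) (hb0 : 1 ≤ (b 0 : ℕ) ∧ (b 0 : ℕ) ≤ l)
    (ha : ∀ j, j ≠ 0 → (a j : ℕ) = l) (hb : ∀ j, j ≠ 0 → (b j : ℕ) = l) {p : Fin (n + 1)}
    (hp : p ≠ 0) (h1 : 1 < k + 1) : plt (Function.update a p ⟨1, h1⟩) b := by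
  set a' := Function.update a p ⟨1, h1⟩
  have ha' : ∀ q, (a' q : ℕ) = if q = p then 1 else (a q : ℕ) := fun q => by
    simp only [a', Function.update_apply]
    split_ifs <;> rfl
  have hbound : ∀ q, 1 ≤ (a' q : ℕ) ∧ (a' q : ℕ) ≤ l ∧ 1 ≤ (b q : ℕ) ∧ (b q : ℕ) ≤ l := by
    intro q
    rw [ha' q]
    obtain rfl | hq := eq_or_ne q 0
    · rw [if_neg hp.symm]
      omega
    · have := ha q hq
      have := hb q hq
      split_ifs <;> omega
  refine plt_of_forall_le_of_rset_lt (fun q => (hbound q).2.1) (fun q => (hbound q).2.2.2) ?_ ?_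
  · rw [rset_eq_empty fun q => by have := hbound q; omega,
      rset_eq_empty fun q => by have := hbound q; omega]
  refine Colex.toColex_lt_toColex_iff_exists_forall_lt.2
    ⟨p, mem_rset.2 (hb p hp), by rw [mem_rset, ha', if_pos rfl]; omega, fun q hq hqb => ?_⟩
  obtain rfl | hq0 := eq_or_ne q 0
  · exact Fin.pos_iff_ne_zero.2 hp
  · exact absurd (mem_rset.2 (hb q hq0)) hqb

lemma dShadow_subset_of_shape (hL : 3 ≤ L) (x : ℕ → Fin (n + 1) → Fin (k + 1))
    (hsucc : ∀ i, 1 ≤ i → i < L - 1 → IsPltSucc (x i) (x (i + 1)))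
    (hshape : ∀ i, 1 ≤ i → i ≤ L - 1 → (x i 0 : ℕ) = i ∧ ∀ j, j ≠ 0 → (x i j : ℕ) = L - 1) :
    dShadow (univ.filter fun y => ple y (x (L - 1))) ⊆
      dShadow (univ.filter fun y => ple y (x 1)) := by
  intro z hz
  obtain ⟨w, hw, p, hp, rfl⟩ := mem_dShadow.1 hz
  by_cases hw1 : ple w (x 1)
  · exact mem_dShadow.2 ⟨w, mem_filter.2 ⟨mem_univ _, hw1⟩, p, hp, rfl⟩
  obtain ⟨i, hi1, hiL, rfl⟩ := exists_eq_of_plt_of_ple x (by omega) hsucc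
    (plt_iff_plKey_lt.2 (not_le.1 (mt ple_iff_plKey_le.2 hw1))) (mem_filter.1 hw).2
  obtain ⟨hx10, hx1⟩ := hshape 1 le_rfl (by omega)
  obtain ⟨hxi0, hxi⟩ := hshape i (by omega) hiL
  obtain rfl | hp0 := eq_or_ne p 0
  · refine mem_dShadow.2 ⟨x 1, mem_filter.2 ⟨mem_univ _, Or.inl rfl⟩, 0,
      Fin.val_ne_zero_iff.1 (by omega), funext fun q => ?_⟩
    obtain rfl | hq := eq_or_ne q 0
    · simp
    · simp only [Function.update_of_ne hq]
      exact Fin.ext ((hx1 q hq).trans (hxi q hq).symm)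
  have h1 : 1 < k + 1 := by have := (x 1 0).isLt; omega
  refine mem_dShadow.2 ⟨Function.update (x i) p ⟨1, h1⟩, mem_filter.2 ⟨mem_univ _, Or.inr ?_⟩,
    p, by simp, Function.update_idem _ _ _⟩
  exact plt_update_one_of_eq (by omega) (by omega) (by omega) hxi hx1 hp0 h1

end Claim

theorem claim12_general (k n L : ℕ) (hL1 : 3 ≤ L)
    (x : ℕ → (Fin (n + 1) → Fin (k + 1)))
    (hbox : ∀ i, 1 ≤ i → i ≤ L - 1 →
      ∀ j : Fin (n + 1), 1 ≤ ((x i) j : ℕ) ∧ ((x i) j : ℕ) ≤ L - 1)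
    (hcons : ∀ i, 1 ≤ i → i ≤ L - 2 →
      plt (x i) (x (i + 1)) ∧
        ∀ z : Fin (n + 1) → Fin (k + 1), plt (x i) z → ple (x (i + 1)) z) :
    (dShadow (Finset.univ.filter fun y => ple y (x (L - 1)))).card =
        (dShadow (Finset.univ.filter fun y => ple y (x 1))).card ↔
      ∀ i, 1 ≤ i → i ≤ L - 1 →
        ((x i) 0 : ℕ) = i ∧ ∀ j : Fin (n + 1), j ≠ 0 → ((x i) j : ℕ) = L - 1 := by
  have hsucc : ∀ i, 1 ≤ i → i < L - 1 → IsPltSucc (x i) (x (i + 1)) :=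
    fun i h1 h2 => hcons i h1 (by omega)
  have hYX : dShadow (univ.filter fun y => ple y (x 1)) ⊆
      dShadow (univ.filter fun y => ple y (x (L - 1))) := by
    refine dShadow_mono fun y hy => mem_filter.2 ⟨mem_univ _, ple_iff_plKey_le.2 ?_⟩
    exact (ple_iff_plKey_le.1 (mem_filter.1 hy).2).trans <|
      (plKey_strictMonoOn x hsucc).monotoneOn ⟨le_rfl, by omega⟩ ⟨by omega, le_rfl⟩ (by omega)
  constructor
  · intro h
    exact shape_of_dShadow_subset hL1 x hbox hsucc (eq_of_subset_of_card_le hYX h.le).superset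
  · intro h
    rw [subset_antisymm (dShadow_subset_of_shape hL1 x hsucc h) hYX]

/-- **Claim 12.** Let `n ≥ 3`, `3 ≤ L ≤ k`, and let `x_1, …, x_{L−1} ∈ {1,…,L−1}^n` be
consecutive points under the `≤`-order on `[k]^n`. Let `X = {y : y ≤ x_{L−1}}` and
`Y = {y : y ≤ x_1}`. Then `|d(X)| = |d(Y)|` iff for every `1 ≤ i ≤ L−1` the point `x_i`
has first coordinate `i` and all other coordinates `L−1`.
(Dimension `n ≥ 3` is rendered as `n + 1` with `n ≥ 2`; the first index is
`0 : Fin (n+1)`; alphabet `[k]` as `Fin (k+1)`, so `L ≤ k + 1`.) -/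
theorem claim12 (k n L : ℕ) (hn : 2 ≤ n) (hL1 : 3 ≤ L) (hL2 : L ≤ k + 1)
    (x : ℕ → (Fin (n + 1) → Fin (k + 1)))
    (hbox : ∀ i, 1 ≤ i → i ≤ L - 1 →
      ∀ j : Fin (n + 1), 1 ≤ ((x i) j : ℕ) ∧ ((x i) j : ℕ) ≤ L - 1)
    (hcons : ∀ i, 1 ≤ i → i ≤ L - 2 →
      plt (x i) (x (i + 1)) ∧
        ∀ z : Fin (n + 1) → Fin (k + 1), plt (x i) z → ple (x (i + 1)) z) :
    (dShadow (Finset.univ.filter fun y => ple y (x (L - 1)))).card =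
        (dShadow (Finset.univ.filter fun y => ple y (x 1))).card ↔
      ∀ i, 1 ≤ i → i ≤ L - 1 →
        ((x i) 0 : ℕ) = i ∧ ∀ j : Fin (n + 1), j ≠ 0 → ((x i) j : ℕ) = L - 1 :=
  claim12_general k n L hL1 x hbox hcons
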